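/- Fix integers η ≥ 2 and ν ≥ 1, let f : ℤ/2ηℤ → ℂ, and let F : ℕ × ℤ/2ηℤ → ℂ be the solution of the explicit discrete heat scheme with initial condition f. Then for every n ∈ ℕ and every integer m with −η/2 ≤ m ≤ η/2, the coarse Fourier coefficient of the restriction of F(n,·) satisfies (F(n,·)‾)^(m) = (1 + θ_η(m)/ν)^n · (f̄)^(m), where θ_η(m) = ψ_η(m)²·U_η(m), ψ_η(m) = (η/(2π))·(1 − e^{2πim/η}) and U_η(m) = e^{−2πim/η}. -/
import Mathlib


open Real Finset

/-- The explicit discrete heat scheme on the grid of `2η` points, time step `1/ν`: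
`F(0,j) = f(j)`,
`F(n+1,j) = F(n,j) + (η²/(4π²ν))·(F(n,j+2) − 2F(n,j) + F(n,j−2))`. -/
noncomputable def heatScheme (η ν : ℕ) (f : ZMod (2 * η) → ℂ) : ℕ → ZMod (2 * η) → ℂ
  | 0 => f
  | n + 1 => fun j =>
      heatScheme η ν f n j + ((η : ℂ) ^ 2 / (4 * (π : ℂ) ^ 2 * ν)) *
        (heatScheme η ν f n (j + 2) - 2 * heatScheme η ν f n j + heatScheme η ν f n (j - 2))

/-- The restriction of `g` to the coarse grid of `η` points: `ḡ(i) = g(2i)`. -/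
def restr (η : ℕ) (g : ZMod (2 * η) → ℂ) : ZMod η → ℂ :=
  fun i => g ((2 * i.val : ℕ) : ZMod (2 * η))

/-- The `m`-th coarse Fourier coefficient:
`ĥ(m) = (1/η)·Σ_{i=0}^{η−1} h(i)·e^{−i m y_i}` with `y_i = −π + 2πi/η`. -/
noncomputable def coarseFourier (η : ℕ) (h : ZMod η → ℂ) (m : ℤ) : ℂ :=
  (1 / (η : ℂ)) * ∑ i ∈ range η,
    h i * Complex.exp (-Complex.I * m * (-(π : ℂ) + 2 * π * i / η))

/-- `ψ_η(m) = (η/(2π))·(1 − e^{2πim/η})`. -/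
noncomputable def psiEta (η : ℕ) (m : ℤ) : ℂ :=
  ((η : ℂ) / (2 * (π : ℂ))) * (1 - Complex.exp (2 * π * Complex.I * m / η))

/-- `U_η(m) = e^{−2πim/η}`. -/
noncomputable def UEta (η : ℕ) (m : ℤ) : ℂ :=
  Complex.exp (-(2 * π * Complex.I * m / η))

/- ## Auxiliary material -/

noncomputable def Eker (η : ℕ) (m : ℤ) (z : ZMod η) : ℂ :=
  Complex.exp (-Complex.I * m * (-(π : ℂ) + 2 * π * z.val / η))

lemma sum_range_zmod (η : ℕ) [NeZero η] (G : ZMod η → ℂ) :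
    ∑ i ∈ range η, G (i : ZMod η) = ∑ z : ZMod η, G z := by
  refine Finset.sum_nbij' (fun i => (i : ZMod η)) (fun z => z.val) ?_ ?_ ?_ ?_ ?_ <;>
    intros <;> simp_all [ZMod.val_natCast_of_lt, ZMod.natCast_val, ZMod.val_lt,
      Finset.mem_range, Nat.mod_eq_of_lt]

lemma coarseFourier_eq (η : ℕ) [NeZero η] (h : ZMod η → ℂ) (m : ℤ) :
    coarseFourier η h m = (1 / (η : ℂ)) * ∑ z : ZMod η, h z * Eker η m z := by
  rw [coarseFourier, ← sum_range_zmod η (fun z => h z * Eker η m z)]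
  congr 1
  refine Finset.sum_congr rfl fun i hi => ?_
  rw [Eker, ZMod.val_natCast_of_lt (Finset.mem_range.mp hi)]

lemma UEta_ne_zero (η : ℕ) (m : ℤ) : UEta η m ≠ 0 := Complex.exp_ne_zero _

lemma Eker_add_one (η : ℕ) (hη : 2 ≤ η) (m : ℤ) (z : ZMod η) :
    Eker η m (z + 1) = UEta η m * Eker η m z := by
  haveI : NeZero η := ⟨by omega⟩
  haveI : Fact (1 < η) := ⟨by omega⟩
  have hη0 : (η : ℂ) ≠ 0 := Nat.cast_ne_zero.mpr (by omega)
  have hval : (z + 1).val = (z.val + 1) % η := by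
    rw [ZMod.val_add, ZMod.val_one]
  rw [Eker, Eker, UEta, hval, ← Complex.exp_add]
  rcases lt_or_ge (z.val + 1) η with hcase | hcase
  · rw [Nat.mod_eq_of_lt hcase]
    congr 1
    push_cast
    ring
  · have hz : z.val + 1 = η := by have := ZMod.val_lt z; omega
    have hzc : (z.val : ℂ) = (η : ℂ) - 1 := by
      have h1 : ((z.val : ℕ) : ℂ) + 1 = ((η : ℕ) : ℂ) := by exact_mod_cast congrArg (Nat.cast (R := ℂ)) hz
      linear_combination h1
    rw [hz, Nat.mod_self]
    have hB : -(2 * ↑π * Complex.I * ↑m / ↑η) + -Complex.I * ↑m * (-(π : ℂ) + 2 * ↑π * ↑z.val / ↑η)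
        = -Complex.I * ↑m * (-(π : ℂ) + 2 * ↑π * ((0 : ℕ) : ℂ) / ↑η)
          + ((-m : ℤ) : ℂ) * (2 * ↑π * Complex.I) := by
      rw [hzc]
      push_cast
      field_simp
      ring
    rw [hB, Complex.exp_add, Complex.exp_int_mul_two_pi_mul_I, mul_one]

lemma Eker_sub_one (η : ℕ) (hη : 2 ≤ η) (m : ℤ) (z : ZMod η) :
    Eker η m (z - 1) = (UEta η m)⁻¹ * Eker η m z := by
  have := Eker_add_one η hη m (z - 1)
  rw [sub_add_cancel] at this
  rw [eq_inv_mul_iff_mul_eq₀ (UEta_ne_zero η m), ← this]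

lemma sum_shift_up (η : ℕ) (hη : 2 ≤ η) (m : ℤ) (g : ZMod η → ℂ) :
    haveI : NeZero η := ⟨by omega⟩
    ∑ z : ZMod η, g (z + 1) * Eker η m z
      = (UEta η m)⁻¹ * ∑ z : ZMod η, g z * Eker η m z := by
  haveI : NeZero η := ⟨by omega⟩
  rw [Finset.mul_sum]
  refine Fintype.sum_equiv (Equiv.addRight (1 : ZMod η)) _ _ fun z => ?_
  simp only [Equiv.coe_addRight]
  rw [Eker_add_one η hη m z]
  field_simp [UEta_ne_zero η m]

lemma sum_shift_down (η : ℕ) (hη : 2 ≤ η) (m : ℤ) (g : ZMod η → ℂ) :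
    haveI : NeZero η := ⟨by omega⟩
    ∑ z : ZMod η, g (z - 1) * Eker η m z
      = UEta η m * ∑ z : ZMod η, g z * Eker η m z := by
  haveI : NeZero η := ⟨by omega⟩
  rw [Finset.mul_sum]
  refine Fintype.sum_equiv (Equiv.subRight (1 : ZMod η)) _ _ fun z => ?_
  simp only [Equiv.subRight_apply]
  rw [Eker_sub_one η hη m z]
  field_simp [UEta_ne_zero η m]

lemma double_add_one (η : ℕ) (hη : 2 ≤ η) (i : ZMod η) :
    ((2 * (i + 1).val : ℕ) : ZMod (2 * η)) = ((2 * i.val : ℕ) : ZMod (2 * η)) + 2 := by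
  haveI : NeZero η := ⟨by omega⟩
  haveI : Fact (1 < η) := ⟨by omega⟩
  have hval : (i + 1).val = (i.val + 1) % η := by rw [ZMod.val_add, ZMod.val_one]
  have : ((2 * i.val : ℕ) : ZMod (2 * η)) + 2 = ((2 * i.val + 2 : ℕ) : ZMod (2 * η)) := by
    push_cast; ring
  rw [hval, this, ZMod.natCast_eq_natCast_iff]
  have h1 : (i.val + 1) % η ≡ i.val + 1 [MOD η] := Nat.mod_modEq _ _
  have h2 := h1.mul_left' (c := 2)
  calc 2 * ((i.val + 1) % η) ≡ 2 * (i.val + 1) [MOD 2 * η] := h2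
    _ = 2 * i.val + 2 := by ring

/-- For `−η/2 ≤ m ≤ η/2`, the coarse Fourier coefficient of the
restriction of the discrete heat scheme satisfies
`(F(n,·)‾)^(m) = (1 + θ_η(m)/ν)^n·(f̄)^(m)`, where `θ_η(m) = ψ_η(m)²·U_η(m)`. -/
theorem heatScheme_coarseFourier (η ν : ℕ) (hη : 2 ≤ η) (hν : 1 ≤ ν)
    (f : ZMod (2 * η) → ℂ)
    (m : ℤ) (hm : -(η : ℤ) ≤ 2 * m ∧ 2 * m ≤ (η : ℤ)) :
    ∀ n : ℕ,
      coarseFourier η (restr η (heatScheme η ν f n)) m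
        = (1 + psiEta η m ^ 2 * UEta η m / (ν : ℂ)) ^ n
            * coarseFourier η (restr η f) m := by
  haveI : NeZero η := ⟨by omega⟩
  have hη0 : (η : ℂ) ≠ 0 := Nat.cast_ne_zero.mpr (by omega)
  have hν0 : (ν : ℂ) ≠ 0 := Nat.cast_ne_zero.mpr (by omega)
  have hπ0 : (π : ℂ) ≠ 0 := Complex.ofReal_ne_zero.mpr Real.pi_ne_zero
  have hU := UEta_ne_zero η m
  set U := UEta η m with hUdef
  set c : ℂ := (η : ℂ) ^ 2 / (4 * (π : ℂ) ^ 2 * ν) with hc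
  -- key coefficient identity
  have hUinv : Complex.exp (2 * π * Complex.I * m / η) = U⁻¹ := by
    rw [hUdef, UEta, ← Complex.exp_neg, neg_neg]
  have hcoef : c * ((U⁻¹ - 2) + U) = psiEta η m ^ 2 * U / ν := by
    rw [psiEta, hUinv, hc]
    field_simp [hU, hη0, hν0, hπ0]
    ring
  intro n
  induction n with
  | zero => simp [heatScheme]
  | succ n ih =>
    have hrestr : restr η (heatScheme η ν f (n + 1))
        = fun i => restr η (heatScheme η ν f n) i
            + c * (restr η (heatScheme η ν f n) (i + 1)
                - 2 * restr η (heatScheme η ν f n) i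
                + restr η (heatScheme η ν f n) (i - 1)) := by
      funext i
      show heatScheme η ν f n _ + _ * (heatScheme η ν f n (_ + 2) - _ + heatScheme η ν f n (_ - 2)) = _
      have h1 : ((2 * i.val : ℕ) : ZMod (2 * η)) + 2 = ((2 * (i + 1).val : ℕ) : ZMod (2 * η)) :=
        (double_add_one η hη i).symm
      have h2 : ((2 * i.val : ℕ) : ZMod (2 * η)) - 2 = ((2 * (i - 1).val : ℕ) : ZMod (2 * η)) := by
        have := double_add_one η hη (i - 1)
        rw [sub_add_cancel] at this
        rw [this]
        ring
      rw [h1, h2]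
      rfl
    set g := restr η (heatScheme η ν f n) with hg
    rw [hrestr, coarseFourier_eq]
    have hexpand : ∀ z : ZMod η,
        (g z + c * (g (z + 1) - 2 * g z + g (z - 1))) * Eker η m z
          = (g z * Eker η m z + c * ((g (z + 1) * Eker η m z - 2 * (g z * Eker η m z))
              + g (z - 1) * Eker η m z)) := fun z => by ring
    rw [Finset.sum_congr rfl fun z _ => hexpand z, Finset.sum_add_distrib,
      ← Finset.mul_sum, Finset.sum_add_distrib, Finset.sum_sub_distrib,
      ← Finset.mul_sum, sum_shift_up η hη m g, sum_shift_down η hη m g]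
    have hS : (1 / (η : ℂ)) * ∑ z : ZMod η, g z * Eker η m z
        = (1 + psiEta η m ^ 2 * U / ν) ^ n * coarseFourier η (restr η f) m := by
      rw [← coarseFourier_eq, hg, ih]
    set S : ℂ := ∑ z : ZMod η, g z * Eker η m z with hSdef
    rw [pow_succ]
    calc (1 / (η : ℂ)) * (S + c * ((U⁻¹ * S - 2 * S) + U * S))
        = (1 + c * ((U⁻¹ - 2) + U)) * ((1 / (η : ℂ)) * S) := by ring
      _ = (1 + psiEta η m ^ 2 * U / ν) * ((1 / (η : ℂ)) * S) := by rw [hcoef]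
      _ = _ := by rw [hS]; ring
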